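/- arXiv:1502.05602 — 6 statements merged into one kernel-verified Lean document; each statement's English description precedes it below -/
import Mathlib

section
/- There exists a function μ from the set of all subsets of ℕ to the real interval [0,1] such that μ(ℕ) = 1, μ(A ∪ B) = μ(A) + μ(B) whenever A and B are disjoint subsets of ℕ, and μ(X + 1) = μ(X) for every X ⊆ ℕ, where X + 1 = {x + 1 : x ∈ X}. -/
open Filter Topology

open scoped Classical in
noncomputable def cnt (A : Set ℕ) (n : ℕ) : ℝ :=
  (((Finset.range n).filter (fun m => m ∈ A)).card : ℝ) / n

open scoped Classical

lemma cnt_mem (A : Set ℕ) (n : ℕ) : cnt A n ∈ Set.Icc (0:ℝ) 1 := by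
  unfold cnt
  constructor
  · positivity
  · apply div_le_one_of_le₀
    · exact_mod_cast (Finset.card_filter_le _ _).trans (by simp)
    · positivity

lemma cnt_univ (n : ℕ) (hn : 1 ≤ n) : cnt Set.univ n = 1 := by
  unfold cnt
  simp only [Set.mem_univ, Finset.filter_true, Finset.card_range]
  exact div_self (Nat.cast_ne_zero.mpr (by omega))

lemma cnt_add (A B : Set ℕ) (h : Disjoint A B) (n : ℕ) :
    cnt (A ∪ B) n = cnt A n + cnt B n := by
  unfold cnt
  have hd : Disjoint ((Finset.range n).filter (fun m => m ∈ A))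
      ((Finset.range n).filter (fun m => m ∈ B)) := by
    rw [Finset.disjoint_filter]
    intro x _ hA hB
    exact Set.disjoint_left.mp h hA hB
  have heq : (Finset.range n).filter (fun m => m ∈ A ∪ B)
      = (Finset.range n).filter (fun m => m ∈ A) ∪ (Finset.range n).filter (fun m => m ∈ B) := by
    ext m; simp [Set.mem_union]; tauto
  simp only [Set.mem_union]
  rw [Finset.filter_or, Finset.card_union_of_disjoint
    (Finset.disjoint_filter.mpr fun x _ hA hB => Set.disjoint_left.mp h hA hB)]
  push_cast
  ring

lemma cnt_shift_card (X : Set ℕ) (n : ℕ) :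
    ((Finset.range n).filter (fun m => m ∈ (fun x => x + 1) '' X)).card
      = ((Finset.range (n-1)).filter (fun m => m ∈ X)).card := by
  rw [show ((Finset.range (n-1)).filter (fun m => m ∈ X)).card
      = (Finset.image (fun x => x + 1) ((Finset.range (n-1)).filter (fun m => m ∈ X))).card from
      (Finset.card_image_of_injective _ (fun a b => by omega)).symm]
  congr 1
  ext m
  simp only [Finset.mem_filter, Finset.mem_range, Finset.mem_image, Set.mem_image]
  constructor
  · rintro ⟨hm, x, hx, rfl⟩
    exact ⟨x, ⟨by omega, hx⟩, rfl⟩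
  · rintro ⟨x, ⟨hx, hxX⟩, rfl⟩
    exact ⟨by omega, x, hxX, rfl⟩

lemma card_range_sub_le (X : Set ℕ) (n : ℕ) :
    ((Finset.range (n-1)).filter (fun m => m ∈ X)).card
      ≤ ((Finset.range n).filter (fun m => m ∈ X)).card ∧
    ((Finset.range n).filter (fun m => m ∈ X)).card
      ≤ ((Finset.range (n-1)).filter (fun m => m ∈ X)).card + 1 := by
  constructor
  · apply Finset.card_le_card
    exact Finset.filter_subset_filter _ (Finset.range_subset_range.mpr (by omega))
  · calc ((Finset.range n).filter (fun m => m ∈ X)).card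
        ≤ (((Finset.range (n-1)).filter (fun m => m ∈ X)) ∪ {n-1}).card := by
          apply Finset.card_le_card
          intro m hm
          simp only [Finset.mem_filter, Finset.mem_range] at hm
          simp only [Finset.mem_union, Finset.mem_filter, Finset.mem_range,
            Finset.mem_singleton]
          rcases hm with ⟨hm1, hm2⟩
          by_cases hc : m = n - 1
          · exact Or.inr hc
          · exact Or.inl ⟨by omega, hm2⟩
      _ ≤ _ := by
          apply (Finset.card_union_le _ _).trans
          simp

lemma cnt_shift_diff (X : Set ℕ) (n : ℕ) :
    |cnt ((fun x => x + 1) '' X) n - cnt X n| ≤ 1 / n := by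
  rcases Nat.eq_zero_or_pos n with rfl | hn
  · simp [cnt]
  unfold cnt
  rw [cnt_shift_card, div_sub_div_same, abs_div, abs_of_nonneg (by positivity : (0:ℝ) ≤ (n:ℝ))]
  have hn' : (0:ℝ) < n := by exact_mod_cast hn
  apply div_le_div_of_nonneg_right _ hn'.le
  rw [abs_sub_le_iff]
  obtain ⟨h1, h2⟩ := card_range_sub_le X n
  have h1' : (((Finset.range (n-1)).filter (fun m => m ∈ X)).card : ℝ)
      ≤ ((Finset.range n).filter (fun m => m ∈ X)).card := by exact_mod_cast h1
  have h2' : (((Finset.range n).filter (fun m => m ∈ X)).card : ℝ)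
      ≤ ((Finset.range (n-1)).filter (fun m => m ∈ X)).card + 1 := by exact_mod_cast h2
  constructor <;> linarith

theorem exists_banach_measure :
    ∃ μ : Set ℕ → ℝ,
      (∀ A : Set ℕ, 0 ≤ μ A ∧ μ A ≤ 1) ∧
      μ Set.univ = 1 ∧
      (∀ A B : Set ℕ, Disjoint A B → μ (A ∪ B) = μ A + μ B) ∧
      (∀ X : Set ℕ, μ ((fun x => x + 1) '' X) = μ X) := by
  obtain ⟨U, hU⟩ := Ultrafilter.exists_le (atTop : Filter ℕ)
  have hlim : ∀ A : Set ℕ, ∃ x, x ∈ Set.Icc (0:ℝ) 1 ∧ Tendsto (cnt A) U (𝓝 x) := by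
    intro A
    have hc : IsCompact (Set.Icc (0:ℝ) 1) := isCompact_Icc
    have hmem : ↑(Ultrafilter.map (cnt A) U) ≤ Filter.principal (Set.Icc (0:ℝ) 1) := by
      rw [Ultrafilter.coe_map, Filter.le_principal_iff, Filter.mem_map]
      exact Filter.univ_mem' (fun n => cnt_mem A n)
    obtain ⟨x, hx, hle⟩ := (isCompact_iff_ultrafilter_le_nhds.mp hc) _ hmem
    exact ⟨x, hx, hle⟩
  choose μ hIcc hT using hlim
  refine ⟨μ, fun A => ⟨(hIcc A).1, (hIcc A).2⟩, ?_, ?_, ?_⟩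
  · have h1 : Tendsto (cnt Set.univ) U (𝓝 1) := by
      apply Tendsto.congr' _ tendsto_const_nhds
      have : ∀ᶠ n in (atTop : Filter ℕ), (1:ℝ) = cnt Set.univ n := by
        filter_upwards [eventually_ge_atTop 1] with n hn
        exact (cnt_univ n hn).symm
      exact hU this
    exact tendsto_nhds_unique (hT _) h1
  · intro A B hAB
    have h1 : Tendsto (cnt (A ∪ B)) U (𝓝 (μ A + μ B)) := by
      have := (hT A).add (hT B)
      apply Tendsto.congr _ this
      intro n
      exact (cnt_add A B hAB n).symm
    exact tendsto_nhds_unique (hT _) h1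
  · intro X
    have hz : Tendsto (fun n => cnt ((fun x => x + 1) '' X) n - cnt X n) U (𝓝 0) := by
      apply Tendsto.mono_left _ hU
      apply squeeze_zero_norm (fun n => cnt_shift_diff X n)
      exact tendsto_one_div_atTop_nhds_zero_nat
    have h1 : Tendsto (cnt ((fun x => x + 1) '' X)) U (𝓝 (μ X + 0)) := by
      have := (hT X).add hz
      apply Tendsto.congr _ this
      intro n; ring
    rw [add_zero] at h1
    exact tendsto_nhds_unique (hT _) h1
end

section
/- Let ξ : ℕ → ℕ be the Collatz map and ξₙ its n-fold iterate. For each natural number n, the set {ω ∈ ℕ : ξₙ(ω) is even} can be written as a finite union of pairwise disjoint arithmetic progressions of the form {p + r·k : k ∈ ℕ} with p ∈ ℕ and r ≥ 1. -/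
/-!
One Collatz step turns a congruence modulo `2 * m` into a congruence modulo `m`, so the parity
of `collatz^[n] ω` depends only on `ω` modulo `2 ^ (n + 1)`. The set in question is therefore
a union of residue classes modulo `2 ^ (n + 1)`, i.e. of disjoint progressions with that step.
-/

/-- The Collatz map. -/
def collatz (n : ℕ) : ℕ := if n % 2 = 0 then n / 2 else 3 * n + 1

def arithProg (p r : ℕ) : Set ℕ := {x | ∃ k : ℕ, x = p + r * k}

theorem mem_arithProg_iff_mod_eq {p r x : ℕ} (hp : p < r) : x ∈ arithProg p r ↔ x % r = p := by
  constructor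
  · rintro ⟨k, rfl⟩
    rw [Nat.add_mul_mod_self_left, Nat.mod_eq_of_lt hp]
  · rintro rfl
    exact ⟨x / r, (Nat.mod_add_div x r).symm⟩

theorem exists_pairwise_disjoint_arithProg_eq_setOf {P : ℕ → Prop} {M : ℕ} (hM : 0 < M)
    (hP : ∀ a b, a ≡ b [MOD M] → P a → P b) :
    ∃ s : Finset (ℕ × ℕ), (∀ q ∈ s, 1 ≤ q.2) ∧
      (s : Set (ℕ × ℕ)).Pairwise (fun q q' => Disjoint (arithProg q.1 q.2) (arithProg q'.1 q'.2)) ∧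
      {x | P x} = ⋃ q ∈ s, arithProg q.1 q.2 := by
  classical
  refine ⟨((Finset.range M).filter P).image (·, M), ?_, ?_, ?_⟩
  · simp only [Finset.mem_image]
    rintro _ ⟨p, -, rfl⟩
    exact hM
  · intro q hq q' hq' hne
    simp only [Finset.coe_image, Set.mem_image, Finset.mem_coe, Finset.mem_filter,
      Finset.mem_range] at hq hq'
    obtain ⟨p, ⟨hp, -⟩, rfl⟩ := hq
    obtain ⟨p', ⟨hp', -⟩, rfl⟩ := hq'
    rw [Set.disjoint_left]
    intro x hx hx'
    rw [mem_arithProg_iff_mod_eq hp] at hx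
    rw [mem_arithProg_iff_mod_eq hp'] at hx'
    exact hne (by rw [← hx, ← hx'])
  · ext x
    simp only [Set.mem_ofPred_eq, Set.mem_iUnion, Finset.mem_image, Finset.mem_filter,
      Finset.mem_range, exists_prop]
    constructor
    · intro hx
      refine ⟨(x % M, M), ⟨x % M, ⟨Nat.mod_lt x hM, hP x _ (Nat.mod_modEq x M).symm hx⟩, rfl⟩, ?_⟩
      exact (mem_arithProg_iff_mod_eq (Nat.mod_lt x hM)).2 rfl
    · rintro ⟨_, ⟨p, ⟨hp, hPp⟩, rfl⟩, hx⟩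
      rw [mem_arithProg_iff_mod_eq hp] at hx
      exact hP p x (by rw [Nat.ModEq, hx, Nat.mod_eq_of_lt hp]) hPp

theorem collatz_modEq {a b m : ℕ} (h : a ≡ b [MOD 2 * m]) : collatz a ≡ collatz b [MOD m] := by
  have hab : a % 2 = b % 2 := Nat.ModEq.of_mul_right m h
  unfold collatz
  rw [hab]
  split_ifs with hb
  · -- `a = 2 * (a / 2)` and `b = 2 * (b / 2)`, so the factor `2` cancels from the modulus
    refine Nat.ModEq.mul_left_cancel' two_ne_zero ?_
    rwa [Nat.mul_div_cancel' (Nat.dvd_of_mod_eq_zero (hab ▸ hb)),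
      Nat.mul_div_cancel' (Nat.dvd_of_mod_eq_zero hb)]
  · exact ((h.mul_left 3).add_right 1).of_mul_left 2

theorem collatz_iterate_modEq (n : ℕ) {a b m : ℕ} (h : a ≡ b [MOD 2 ^ n * m]) :
    collatz^[n] a ≡ collatz^[n] b [MOD m] := by
  induction n generalizing a b with
  | zero => simpa using h
  | succ n ih =>
    rw [Function.iterate_succ_apply, Function.iterate_succ_apply]
    exact ih (collatz_modEq (by rwa [← mul_assoc, ← pow_succ']))

theorem collatz_iterate_even_preimage_is_finite_union_of_APs (n : ℕ) :
    ∃ s : Finset (ℕ × ℕ),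
      (∀ q ∈ s, 1 ≤ q.2) ∧
      ((s : Set (ℕ × ℕ)).Pairwise fun q q' =>
        Disjoint {x : ℕ | ∃ k : ℕ, x = q.1 + q.2 * k}
          {x : ℕ | ∃ k : ℕ, x = q'.1 + q'.2 * k}) ∧
      {ω : ℕ | collatz^[n] ω % 2 = 0} =
        ⋃ q ∈ s, {x : ℕ | ∃ k : ℕ, x = q.1 + q.2 * k} := by
  refine exists_pairwise_disjoint_arithProg_eq_setOf (M := 2 ^ n * 2) (by positivity) ?_
  intro a b hab ha
  exact Eq.trans (collatz_iterate_modEq n hab).symm ha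
end

section
/- Let ξ : ℕ → ℕ be the Collatz map and ξₙ its n-fold iterate. For every natural number n, the limit as m → ∞ of #{k : 1 ≤ k ≤ m and ξₙ(k) is even}/m exists and equals 2/3 + (−1)^{n+1}/(3·2^{n+1}), and the limit as m → ∞ of #{k : 1 ≤ k ≤ m and ξₙ(k) is odd}/m exists and equals 1/3 + (−1)ⁿ/(3·2^{n+1}). -/
/-!
Since `collatz` maps residues modulo `2 ^ (j + 1)` to residues modulo `2 ^ j`, the parity of
`collatz^[n] k` depends only on `k` modulo `2 ^ (n + 1)`; the density of the even values is then
`E n / 2 ^ (n + 1)`, where `E n = collatzEvenCount n` counts them over one period. Splitting `k`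
into `2u`, which goes to `u` in one step, and `2u + 1`, which reaches `3u + 2` in two, and using
that `u ↦ 3u + 2` permutes the residues, gives `E (n + 2) = E (n + 1) + 2 E n` with `E 0 = 1`,
`E 1 = 3`, hence `3 E n = 2 ^ (n + 2) - (-1) ^ n`.
-/

open Filter Topology

open Finset Function

namespace Nat

variable {p : ℕ → Prop} [DecidablePred p]

theorem count_two_mul (N : ℕ) :
    count p (2 * N) = count (fun u => p (2 * u)) N + count (fun u => p (2 * u + 1)) N := by
  induction N with
  | zero => simp
  | succ N ih =>
    rw [show 2 * (N + 1) = 2 * N + 1 + 1 by ring, count_succ, count_succ, count_succ, count_succ,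
      ih]
    ring

theorem count_mod_two_eq_zero_add_count_mod_two_eq_one (f : ℕ → ℕ) (N : ℕ) :
    count (fun k => f k % 2 = 0) N + count (fun k => f k % 2 = 1) N = N := by
  induction N with
  | zero => simp
  | succ N ih =>
    rw [count_succ, count_succ]
    split_ifs <;> omega

theorem card_filter_Icc_one_eq_count (m : ℕ) :
    ((Icc 1 m).filter p).card = count (fun k => p (k + 1)) m := by
  have hIcc : (range m).map (addRightEmbedding 1) = Icc 1 m := by
    rw [range_eq_Ico, map_add_right_Ico, zero_add, Finset.Ico_add_one_right_eq_Icc]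
  rw [← hIcc, filter_map, card_map, count_eq_card_filter_range]
  rfl

theorem count_comp_affine_of_periodic {P a : ℕ} (hp : Periodic p P) (ha : a.Coprime P)
    (b : ℕ) : count (fun u => p (a * u + b)) P = count p P := by
  have hinj : Set.InjOn (fun u => (a * u + b) % P) (range P) := by
    intro u hu v hv huv
    have hlin : a * u ≡ a * v [MOD P] := Nat.ModEq.add_right_cancel' b huv
    exact (hlin.cancel_left_of_coprime (Nat.coprime_comm.mp ha)).eq_of_lt_of_lt
      (mem_range.mp hu) (mem_range.mp hv)
  have himage : (range P).image (fun u => (a * u + b) % P) = range P := by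
    refine eq_of_subset_of_card_le (fun x hx => ?_) (Finset.card_image_of_injOn hinj).ge
    obtain ⟨u, hu, rfl⟩ := mem_image.mp hx
    exact mem_range.mpr (Nat.mod_lt _ (Nat.zero_lt_of_lt (mem_range.mp hu)))
  rw [count_eq_card_filter_range, count_eq_card_filter_range]
  conv_rhs =>
    rw [← himage, filter_image, Finset.card_image_of_injOn (hinj.mono (filter_subset _ _))]
  simp only [hp.map_mod_nat]

end Nat

namespace Function.Periodic

variable {p : ℕ → Prop} [DecidablePred p] {P : ℕ}

theorem comp_affine {α : Type*} {f : ℕ → α} (hf : Periodic f P) (a b : ℕ) :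
    Periodic (fun u => f (a * u + b)) P := fun u => by
  simpa only [mul_add, add_right_comm, Nat.cast_id] using hf.nat_mul a (a * u + b)

theorem count_nat_mul (hp : Periodic p P) (n : ℕ) : Nat.count p (n * P) = n * Nat.count p P := by
  induction n with
  | zero => simp
  | succ n ih =>
    have hshift : ∀ k, p (n * P + k) ↔ p k := fun k => by
      rw [add_comm]; exact (hp.nat_mul n k).to_iff
    simp only [Nat.succ_mul, Nat.count_add, hshift, ih]

theorem count_comp_add_one (hp : Periodic p P) :
    Nat.count (fun k => p (k + 1)) P = Nat.count p P := by
  have h₁ := Nat.count_add' (p := p) P 1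
  have h₂ := Nat.count_succ (p := p) P
  have hP0 : p P ↔ p 0 := hp.eq.to_iff
  simp only [hP0, ← Nat.count_one] at h₂
  omega

theorem tendsto_count_div (hp : Periodic p P) (hP : 0 < P) :
    Tendsto (fun m : ℕ => (Nat.count p m : ℝ) / m) atTop (𝓝 (Nat.count p P / P)) := by
  -- Along the multiples of `P` the ratio is exactly `count p P / P`; monotonicity does the rest.
  refine tendsto_div_of_monotone_of_exists_subseq_tendsto_div _ _
    (fun _ _ h => by exact_mod_cast Nat.count_monotone p h) fun a ha => ⟨fun n => n * P, ?_, ?_, ?_⟩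
  · obtain ⟨N, hN⟩ := exists_nat_ge (1 / (a - 1))
    filter_upwards [eventually_ge_atTop N] with n hn
    have hn' : 1 ≤ (a - 1) * n :=
      (div_le_iff₀' (by linarith)).mp (hN.trans (by exact_mod_cast hn))
    push_cast
    nlinarith [(Nat.cast_pos.mpr hP : (0 : ℝ) < P)]
  · exact tendsto_atTop_mono (fun n => Nat.le_mul_of_pos_right n hP) tendsto_id
  · refine tendsto_const_nhds.congr' ?_
    filter_upwards [eventually_ge_atTop 1] with n hn
    rw [hp.count_nat_mul]
    push_cast
    rw [mul_div_mul_left _ _ (by positivity)]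

theorem tendsto_card_filter_Icc_div (hp : Periodic p P) (hP : 0 < P) :
    Tendsto (fun m : ℕ => (((Icc 1 m).filter p).card : ℝ) / m) atTop (𝓝 (Nat.count p P / P)) := by
  simp only [Nat.card_filter_Icc_one_eq_count]
  rw [← hp.count_comp_add_one]
  exact (hp.add_const 1).tendsto_count_div hP

end Function.Periodic

theorem collatz_two_mul (u : ℕ) : collatz (2 * u) = u := by
  simp [collatz]

theorem collatz_two_mul_add_one (u : ℕ) : collatz (2 * u + 1) = 2 * (3 * u + 2) := by
  simp only [collatz]
  split_ifs <;> omega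

theorem collatz_modEq_s8 {j k k' : ℕ} (h : k ≡ k' [MOD 2 ^ (j + 1)]) :
    collatz k ≡ collatz k' [MOD 2 ^ j] := by
  have hpar : k % 2 = k' % 2 := Nat.ModEq.of_dvd (dvd_pow_self 2 j.succ_ne_zero) h
  obtain ⟨u, rfl | rfl⟩ := Nat.even_or_odd' k <;> obtain ⟨u', rfl | rfl⟩ := Nat.even_or_odd' k'
  · rw [collatz_two_mul, collatz_two_mul]
    exact Nat.ModEq.mul_left_cancel' two_ne_zero (by rwa [← pow_succ'])
  · omega
  · omega
  · have hodd (v : ℕ) : collatz (2 * v + 1) = 3 * (2 * v + 1) + 1 := by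
      rw [collatz_two_mul_add_one]; ring
    rw [hodd, hodd]
    exact ((h.mul_left 3).add_right 1).of_dvd (pow_dvd_pow 2 j.le_succ)

theorem collatz_iterate_modEq_s8 (n : ℕ) {j k k' : ℕ} (h : k ≡ k' [MOD 2 ^ (n + j)]) :
    collatz^[n] k ≡ collatz^[n] k' [MOD 2 ^ j] := by
  induction n generalizing k k' with
  | zero => simpa using h
  | succ n ih =>
    rw [iterate_succ_apply, iterate_succ_apply]
    exact ih (collatz_modEq_s8 (by rwa [show n + j + 1 = n + 1 + j by omega]))

theorem periodic_collatz_iterate_mod_two_eq (n i : ℕ) :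
    Periodic (fun k => collatz^[n] k % 2 = i) (2 ^ (n + 1)) := fun _ =>
  congrArg (· = i) (collatz_iterate_modEq_s8 n (j := 1) Nat.add_modEq_right)

def collatzEvenCount (n : ℕ) : ℕ := Nat.count (fun k => collatz^[n] k % 2 = 0) (2 ^ (n + 1))

theorem collatzEvenCount_add_two (n : ℕ) :
    collatzEvenCount (n + 2) = collatzEvenCount (n + 1) + 2 * collatzEvenCount n := by
  have hper := periodic_collatz_iterate_mod_two_eq n 0
  have hodd : Nat.count (fun u => collatz^[n + 2] (2 * u + 1) % 2 = 0) (2 ^ (n + 2))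
      = 2 * collatzEvenCount n := by
    simp only [iterate_succ_apply, collatz_two_mul_add_one, collatz_two_mul]
    rw [pow_succ', (hper.comp_affine 3 2).count_nat_mul,
      Nat.count_comp_affine_of_periodic hper (Nat.Coprime.pow_right _ (by norm_num))]
    rfl
  rw [collatzEvenCount, pow_succ', Nat.count_two_mul, hodd]
  simp only [iterate_succ_apply, collatz_two_mul]
  rfl

theorem three_mul_collatzEvenCount {R : Type*} [CommRing R] (n : ℕ) :
    3 * (collatzEvenCount n : R) = 2 ^ (n + 2) - (-1) ^ n := by
  induction n using Nat.twoStepInduction with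
  | zero => norm_num [show collatzEvenCount 0 = 1 by decide]
  | one => norm_num [show collatzEvenCount 1 = 3 by decide]
  | more n ih₀ ih₁ =>
    rw [collatzEvenCount_add_two]
    push_cast
    linear_combination ih₁ + 2 * ih₀

theorem collatz_iterate_parity_density (n : ℕ) :
    Tendsto (fun m : ℕ =>
        (((Finset.Icc 1 m).filter (fun k => collatz^[n] k % 2 = 0)).card : ℝ) / m)
      atTop (nhds (2/3 + (-1 : ℝ) ^ (n + 1) / (3 * 2 ^ (n + 1)))) ∧
    Tendsto (fun m : ℕ =>
        (((Finset.Icc 1 m).filter (fun k => collatz^[n] k % 2 = 1)).card : ℝ) / m)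
      atTop (nhds (1/3 + (-1 : ℝ) ^ n / (3 * 2 ^ (n + 1)))) := by
  have hP : 0 < 2 ^ (n + 1) := by positivity
  have hE := three_mul_collatzEvenCount (R := ℝ) n
  have hO : (Nat.count (fun k => collatz^[n] k % 2 = 1) (2 ^ (n + 1)) : ℝ)
      = 2 ^ (n + 1) - collatzEvenCount n := by
    rw [eq_sub_iff_add_eq', collatzEvenCount]
    exact_mod_cast Nat.count_mod_two_eq_zero_add_count_mod_two_eq_one _ _
  constructor
  · convert (periodic_collatz_iterate_mod_two_eq n 0).tendsto_card_filter_Icc_div hP using 2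
    rw [← collatzEvenCount]
    push_cast
    field_simp
    linear_combination -hE
  · convert (periodic_collatz_iterate_mod_two_eq n 1).tendsto_card_filter_Icc_div hP using 2
    rw [hO]
    push_cast
    field_simp
    linear_combination hE
end

section
/- Let ξ : ℕ → ℕ be the Collatz map and let μ be any shift-invariant finitely additive probability measure on the subsets of ℕ. Write A = {ω : ω ≡ 1 (mod 3)} and B = {ω : ω ≢ 1 (mod 3)}. Then: μ({ω ∈ A : ξ(ω) ≡ 1 (mod 3)})/μ(A) = 1/2; μ({ω ∈ A : ξ(ω) ≢ 1 (mod 3)})/μ(A) = 1/2; μ({ω ∈ B : ξ(ω) ≡ 1 (mod 3)})/μ(B) = 3/4; and μ({ω ∈ B : ξ(ω) ≢ 1 (mod 3)})/μ(B) = 1/4. -/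
private def C6 (r : ℕ) : Set ℕ := {n : ℕ | n % 6 = r}

private lemma C6_disj {r s : ℕ} (h : r ≠ s) : Disjoint (C6 r) (C6 s) :=
  Set.disjoint_left.mpr (fun _ ha hb => h (ha.symm.trans hb))

theorem collatz_mod_three_transition_probabilities (μ : Set ℕ → ℝ)
    (hμ01 : ∀ A : Set ℕ, 0 ≤ μ A ∧ μ A ≤ 1)
    (hμuniv : μ Set.univ = 1)
    (hadd : ∀ A B : Set ℕ, Disjoint A B → μ (A ∪ B) = μ A + μ B)
    (hshift : ∀ X : Set ℕ, μ ((fun x => x + 1) '' X) = μ X) :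
    μ {ω : ℕ | collatz ω % 3 = 1 ∧ ω % 3 = 1} / μ {ω : ℕ | ω % 3 = 1} = 1 / 2 ∧
    μ {ω : ℕ | collatz ω % 3 ≠ 1 ∧ ω % 3 = 1} / μ {ω : ℕ | ω % 3 = 1} = 1 / 2 ∧
    μ {ω : ℕ | collatz ω % 3 = 1 ∧ ω % 3 ≠ 1} / μ {ω : ℕ | ω % 3 ≠ 1} = 3 / 4 ∧
    μ {ω : ℕ | collatz ω % 3 ≠ 1 ∧ ω % 3 ≠ 1} / μ {ω : ℕ | ω % 3 ≠ 1} = 1 / 4 := by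
  -- singleton {0} has measure 0
  have hμ0 : μ {(0 : ℕ)} = 0 := by
    have h1 : (fun x => x + 1) '' Set.univ = {n : ℕ | 1 ≤ n} := by
      ext n
      simp only [Set.image_univ, Set.mem_range, Set.mem_setOf_eq]
      constructor
      · rintro ⟨m, rfl⟩; omega
      · intro h; exact ⟨n - 1, by omega⟩
    have h2 : μ {n : ℕ | 1 ≤ n} = 1 := by rw [← h1, hshift, hμuniv]
    have h3 : (Set.univ : Set ℕ) = {0} ∪ {n : ℕ | 1 ≤ n} := by
      ext n; simp; omega
    have hd : Disjoint ({0} : Set ℕ) {n : ℕ | 1 ≤ n} := by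
      rw [Set.disjoint_left]; intro a ha hb; simp at ha hb; omega
    have h4 := hadd _ _ hd
    rw [← h3, hμuniv, h2] at h4
    linarith
  -- shift moves residue classes
  have himg : ∀ r, r < 5 → (fun x => x + 1) '' C6 r = C6 (r + 1) := by
    intro r hr
    ext n
    simp only [C6, Set.mem_image, Set.mem_setOf_eq]
    constructor
    · rintro ⟨m, hm, rfl⟩; omega
    · intro h; exact ⟨n - 1, by omega, by omega⟩
  have heq : ∀ r, r < 5 → μ (C6 (r + 1)) = μ (C6 r) := by
    intro r hr; rw [← himg r hr, hshift]
  have himg5 : (fun x => x + 1) '' C6 5 = C6 0 \ {0} := by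
    ext n
    simp only [C6, Set.mem_image, Set.mem_setOf_eq, Set.mem_diff, Set.mem_singleton_iff]
    constructor
    · rintro ⟨m, hm, rfl⟩; omega
    · intro h; exact ⟨n - 1, by omega, by omega⟩
  have hsplit : C6 0 = (C6 0 \ {0}) ∪ {0} := by
    ext n
    simp only [C6, Set.mem_setOf_eq, Set.mem_union, Set.mem_diff, Set.mem_singleton_iff]
    omega
  have hdsplit : Disjoint (C6 0 \ {0}) ({0} : Set ℕ) := by
    rw [Set.disjoint_left]; intro a ha hb; exact ha.2 hb
  have h50 : μ (C6 5) = μ (C6 0) := by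
    have h1 : μ (C6 0) = μ (C6 0 \ {0}) + μ {0} := by
      conv_lhs => rw [hsplit]
      exact hadd _ _ hdsplit
    have h2 : μ (C6 5) = μ (C6 0 \ {0}) := by rw [← himg5, hshift]
    rw [h2, h1, hμ0]; ring
  have e1 : μ (C6 1) = μ (C6 0) := heq 0 (by norm_num)
  have e2 : μ (C6 2) = μ (C6 0) := (heq 1 (by norm_num)).trans e1
  have e3 : μ (C6 3) = μ (C6 0) := (heq 2 (by norm_num)).trans e2
  have e4 : μ (C6 4) = μ (C6 0) := (heq 3 (by norm_num)).trans e3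
  have e5 : μ (C6 5) = μ (C6 0) := h50
  -- the six classes partition ℕ
  have hu : (Set.univ : Set ℕ) = ((((C6 0 ∪ C6 1) ∪ C6 2) ∪ C6 3) ∪ C6 4) ∪ C6 5 := by
    ext n; simp only [C6, Set.mem_univ, Set.mem_union, Set.mem_setOf_eq, true_iff]; omega
  have d1 : Disjoint (C6 0) (C6 1) := C6_disj (by norm_num)
  have d2 : Disjoint (C6 0 ∪ C6 1) (C6 2) :=
    Disjoint.union_left (C6_disj (by norm_num)) (C6_disj (by norm_num))
  have d3 : Disjoint ((C6 0 ∪ C6 1) ∪ C6 2) (C6 3) :=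
    Disjoint.union_left (Disjoint.union_left (C6_disj (by norm_num)) (C6_disj (by norm_num)))
      (C6_disj (by norm_num))
  have d4 : Disjoint (((C6 0 ∪ C6 1) ∪ C6 2) ∪ C6 3) (C6 4) :=
    Disjoint.union_left (Disjoint.union_left (Disjoint.union_left (C6_disj (by norm_num))
      (C6_disj (by norm_num))) (C6_disj (by norm_num))) (C6_disj (by norm_num))
  have d5 : Disjoint ((((C6 0 ∪ C6 1) ∪ C6 2) ∪ C6 3) ∪ C6 4) (C6 5) :=
    Disjoint.union_left (Disjoint.union_left (Disjoint.union_left (Disjoint.union_left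
      (C6_disj (by norm_num)) (C6_disj (by norm_num))) (C6_disj (by norm_num)))
      (C6_disj (by norm_num))) (C6_disj (by norm_num))
  have hsum : μ (C6 0) = 1 / 6 := by
    have h1 : (1 : ℝ) = μ (C6 0) + μ (C6 1) + μ (C6 2) + μ (C6 3) + μ (C6 4) + μ (C6 5) := by
      rw [← hμuniv, hu, hadd _ _ d5, hadd _ _ d4, hadd _ _ d3, hadd _ _ d2, hadd _ _ d1]
    rw [e1, e2, e3, e4, e5] at h1
    linarith
  -- collatz mod 3 determined by n mod 6
  have hcol : ∀ n : ℕ, collatz n % 3 = 1 ↔ (n % 6 = 1 ∨ n % 6 = 2 ∨ n % 6 = 3 ∨ n % 6 = 5) := by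
    intro n; unfold collatz; split <;> omega
  -- identify the sets
  have hS1 : {ω : ℕ | collatz ω % 3 = 1 ∧ ω % 3 = 1} = C6 1 := by
    ext n; simp only [C6, Set.mem_setOf_eq]; have := hcol n; omega
  have hS2 : {ω : ℕ | collatz ω % 3 ≠ 1 ∧ ω % 3 = 1} = C6 4 := by
    ext n; simp only [C6, Set.mem_setOf_eq]; have := hcol n; omega
  have hA : {ω : ℕ | ω % 3 = 1} = C6 1 ∪ C6 4 := by
    ext n; simp only [C6, Set.mem_setOf_eq, Set.mem_union]; omega
  have hS3 : {ω : ℕ | collatz ω % 3 = 1 ∧ ω % 3 ≠ 1} = (C6 2 ∪ C6 3) ∪ C6 5 := by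
    ext n; simp only [C6, Set.mem_setOf_eq, Set.mem_union]; have := hcol n; omega
  have hS4 : {ω : ℕ | collatz ω % 3 ≠ 1 ∧ ω % 3 ≠ 1} = C6 0 := by
    ext n; simp only [C6, Set.mem_setOf_eq]; have := hcol n; omega
  have hB : {ω : ℕ | ω % 3 ≠ 1} = ((C6 0 ∪ C6 2) ∪ C6 3) ∪ C6 5 := by
    ext n; simp only [C6, Set.mem_setOf_eq, Set.mem_union]; omega
  -- measures of A and B
  have hμA : μ {ω : ℕ | ω % 3 = 1} = 1 / 3 := by
    rw [hA, hadd _ _ (C6_disj (by norm_num)), e1, e4, hsum]; norm_num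
  have dB1 : Disjoint (C6 0) (C6 2) := C6_disj (by norm_num)
  have dB2 : Disjoint (C6 0 ∪ C6 2) (C6 3) :=
    Disjoint.union_left (C6_disj (by norm_num)) (C6_disj (by norm_num))
  have dB3 : Disjoint ((C6 0 ∪ C6 2) ∪ C6 3) (C6 5) :=
    Disjoint.union_left (Disjoint.union_left (C6_disj (by norm_num)) (C6_disj (by norm_num)))
      (C6_disj (by norm_num))
  have hμB : μ {ω : ℕ | ω % 3 ≠ 1} = 2 / 3 := by
    rw [hB, hadd _ _ dB3, hadd _ _ dB2, hadd _ _ dB1, e2, e3, e5, hsum]; norm_num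
  have dS31 : Disjoint (C6 2) (C6 3) := C6_disj (by norm_num)
  have dS32 : Disjoint (C6 2 ∪ C6 3) (C6 5) :=
    Disjoint.union_left (C6_disj (by norm_num)) (C6_disj (by norm_num))
  have hμS3 : μ {ω : ℕ | collatz ω % 3 = 1 ∧ ω % 3 ≠ 1} = 1 / 2 := by
    rw [hS3, hadd _ _ dS32, hadd _ _ dS31, e2, e3, e5, hsum]; norm_num
  refine ⟨?_, ?_, ?_, ?_⟩
  · rw [hS1, e1, hsum, hμA]; norm_num
  · rw [hS2, e4, hsum, hμA]; norm_num
  · rw [hμS3, hμB]; norm_num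
  · rw [hS4, hsum, hμB]; norm_num
end

section
/- Let ξ : ℕ → ℕ be the Collatz map and ξₙ its n-fold iterate. For each natural number n, the set {ω ∈ ℕ : ξₙ(ω) ≡ 1 (mod 3)} can be written as a finite union of pairwise disjoint arithmetic progressions of the form {p + r·k : k ∈ ℕ} with p ∈ ℕ and r ≥ 1. -/
lemma collatz_key : ∀ n ω k : ℕ, ∃ c, collatz^[n] (ω + 3 * 2 ^ n * k) = collatz^[n] ω + 3 * c := by
  intro n
  induction n with
  | zero => intro ω k; exact ⟨k, by simp⟩
  | succ n ih =>
    intro ω k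
    set u := 2 ^ n * k with hu
    have harg : 3 * 2 ^ (n + 1) * k = 6 * u := by rw [hu, pow_succ]; ring
    rw [Function.iterate_succ_apply, Function.iterate_succ_apply, harg]
    rcases Nat.even_or_odd ω with h | h
    · have hω : ω % 2 = 0 := Nat.even_iff.mp h
      have h2 : collatz (ω + 6 * u) = collatz ω + 3 * u := by
        unfold collatz; split_ifs <;> omega
      rw [h2]
      have := ih (collatz ω) k
      rwa [show 3 * 2 ^ n * k = 3 * u by rw [hu]; ring] at this
    · have hω : ω % 2 = 1 := Nat.odd_iff.mp h
      have h2 : collatz (ω + 6 * u) = collatz ω + 3 * (6 * u) := by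
        unfold collatz; split_ifs <;> omega
      rw [h2]
      have := ih (collatz ω) (6 * k)
      rwa [show 3 * 2 ^ n * (6 * k) = 3 * (6 * u) by rw [hu]; ring] at this

theorem collatz_iterate_mod_three_preimage_is_finite_union_of_APs (n : ℕ) :
    ∃ s : Finset (ℕ × ℕ),
      (∀ q ∈ s, 1 ≤ q.2) ∧
      ((s : Set (ℕ × ℕ)).Pairwise fun q q' =>
        Disjoint {x : ℕ | ∃ k : ℕ, x = q.1 + q.2 * k}
          {x : ℕ | ∃ k : ℕ, x = q'.1 + q'.2 * k}) ∧
      {ω : ℕ | collatz^[n] ω % 3 = 1} =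
        ⋃ q ∈ s, {x : ℕ | ∃ k : ℕ, x = q.1 + q.2 * k} := by
  set M := 3 * 2 ^ n with hM
  have hM1 : 1 ≤ M := by have := Nat.two_pow_pos n; omega
  refine ⟨((Finset.range M).filter (fun r => collatz^[n] r % 3 = 1)).image (fun r => (r, M)),
    ?_, ?_, ?_⟩
  · intro q hq
    simp only [Finset.mem_image, Finset.mem_filter, Finset.mem_range] at hq
    obtain ⟨r, _, rfl⟩ := hq
    exact hM1
  · intro q hq q' hq' hne
    simp only [Finset.coe_image, Set.mem_image, Finset.mem_coe, Finset.mem_filter,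
      Finset.mem_range] at hq hq'
    obtain ⟨r, ⟨hr, _⟩, rfl⟩ := hq
    obtain ⟨r', ⟨hr', _⟩, rfl⟩ := hq'
    rw [Set.disjoint_left]
    rintro x ⟨k, rfl⟩ ⟨k', hk'⟩
    simp only at hk'
    have e1 : (r + M * k) % M = r := by
      rw [Nat.add_mul_mod_self_left, Nat.mod_eq_of_lt hr]
    have e2 : (r' + M * k') % M = r' := by
      rw [Nat.add_mul_mod_self_left, Nat.mod_eq_of_lt hr']
    rw [hk'] at e1
    exact hne (by rw [e1.symm.trans e2])
  · ext ω
    simp only [Set.mem_setOf_eq, Set.mem_iUnion, Finset.mem_coe, Finset.mem_image,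
      Finset.mem_filter, Finset.mem_range, exists_prop]
    constructor
    · intro hω
      obtain ⟨c, hc⟩ := collatz_key n (ω % M) (ω / M)
      have hrep : ω % M + 3 * 2 ^ n * (ω / M) = ω := by
        rw [← hM]; exact Nat.mod_add_div ω M
      rw [hrep] at hc
      refine ⟨(ω % M, M), ⟨ω % M, ⟨Nat.mod_lt _ hM1, by omega⟩, rfl⟩,
        ω / M, (Nat.mod_add_div ω M).symm⟩
    · rintro ⟨q, ⟨r, ⟨hrM, hr1⟩, rfl⟩, k, rfl⟩
      obtain ⟨c, hc⟩ := collatz_key n r k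
      simp only
      rw [hM, hc]
      omega
end

section
/- Identify the set N_S of supernatural numbers with functions e from the set of prime numbers to ℕ ∪ {∞}, where the product of supernatural numbers corresponds to pointwise addition of exponent functions (with ∞ + a = ∞), and each natural number n ≥ 1 is identified with the supernatural number p ↦ v_p(n) given by its prime factor exponents. Then there is no binary operation ⊕ on N_S such that for every natural number n ≥ 1 and every supernatural number m, the n-fold sum m ⊕ m ⊕ ⋯ ⊕ m (n terms) equals the supernatural product n·m. -/
/-- A supernatural (Steinitz) number: a function assigning to each prime an
exponent in `ℕ ∪ {∞}`. -/
def Supernatural : Type := {p : ℕ // p.Prime} → ℕ∞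

/-- Multiplication of supernatural numbers: pointwise addition of exponents
(in `ℕ∞`, where `∞ + a = ∞`). -/
def Supernatural.mul (x y : Supernatural) : Supernatural := fun p => x p + y p

/-- The supernatural number corresponding to a natural number `n ≥ 1`:
its exponent at a prime `p` is the `p`-adic valuation of `n`. -/
def Supernatural.ofNat (n : ℕ) : Supernatural := fun p => (n.factorization p.1 : ℕ∞)

/-- `Supernatural.iterOp op m n` is the sum `m ⊕ m ⊕ ⋯ ⊕ m` of `n + 1` copies of `m`,
associated to the left: `((m ⊕ m) ⊕ m) ⊕ ⋯ ⊕ m`. -/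
def Supernatural.iterOp (op : Supernatural → Supernatural → Supernatural)
    (m : Supernatural) : ℕ → Supernatural
  | 0 => m
  | n + 1 => op (Supernatural.iterOp op m n) m

theorem no_addition_on_supernaturals :
    ¬ ∃ op : Supernatural → Supernatural → Supernatural,
      ∀ (n : ℕ), 1 ≤ n → ∀ m : Supernatural,
        Supernatural.iterOp op m (n - 1) = Supernatural.mul (Supernatural.ofNat n) m := by
  rintro ⟨op, h⟩
  -- the supernatural number with exponent ∞ at 2 and 0 elsewhere
  set m : Supernatural := fun p => if p.1 = 2 then (⊤ : ℕ∞) else 0 with hm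
  have h2 := h 2 one_le_two m
  have h3 := h 3 (by norm_num) m
  have h4 := h 4 (by norm_num) m
  have h5 := h 5 (by norm_num) m
  simp only [Supernatural.iterOp] at h2 h3 h4 h5
  -- 2·m = 4·m since m has ∞ at the prime 2
  have key : Supernatural.mul (Supernatural.ofNat 2) m
      = Supernatural.mul (Supernatural.ofNat 4) m := by
    funext p
    simp only [Supernatural.mul, Supernatural.ofNat, hm]
    by_cases hp : p.1 = 2
    · simp [hp]
    · have e2 : Nat.factorization 2 p.1 = 0 :=
        Nat.factorization_eq_zero_of_not_dvd (fun hd =>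
          hp ((Nat.prime_dvd_prime_iff_eq p.2 Nat.prime_two).mp hd))
      have e4 : Nat.factorization 4 p.1 = 0 :=
        Nat.factorization_eq_zero_of_not_dvd (by
          intro hd
          have : p.1 ∣ 2 * 2 := by norm_num at hd ⊢; exact hd
          rcases (Nat.Prime.dvd_mul p.2).mp this with h' | h' <;>
            exact hp ((Nat.prime_dvd_prime_iff_eq p.2 Nat.prime_two).mp h'))
      rw [e2, e4]
  -- hence 3·m = 5·m
  have h35 : Supernatural.mul (Supernatural.ofNat 3) m
      = Supernatural.mul (Supernatural.ofNat 5) m := by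
    rw [h2] at h3
    rw [h2, h3] at h4
    rw [h2, h3, h4] at h5
    rw [← key] at h5
    exact h3.symm.trans h5
  -- evaluate at the prime 3
  have := congrFun h35 ⟨3, by norm_num⟩
  simp only [Supernatural.mul, Supernatural.ofNat, hm] at this
  norm_num [Nat.Prime.factorization_self (by norm_num : Nat.Prime 3),
    Nat.factorization_eq_zero_of_not_dvd (by norm_num : ¬ (3:ℕ) ∣ 5)] at this
end
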